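/- arXiv:math/0205204 — 3 statements merged into one kernel-verified Lean document; each statement's English description precedes it below -/
import Mathlib

section
/- Let B and B̃ be complex Banach spaces, let i : B̃ → B be a compact continuous linear map, let V ⊆ B be an open set, let R̃ : V → B̃ be Fréchet differentiable, and set R := i ∘ R̃ : V → B. Let S ⊆ B × B be a set whose first projection is contained in V, and for f ∈ B write E_f := {v ∈ B : (f, v) ∈ S}. Assume: (1) vector bundle structure: if (f, v₁) ∈ S and (f, v₂) ∈ S then (f, α·v₁ + v₂) ∈ S for every α ∈ ℂ; (2) semicontinuity: S is closed in B × B, i.e. if (fₙ, vₙ) ∈ S and (fₙ, vₙ) → (f, v) then (f, v) ∈ S; (3) invariance: if (f, v) ∈ S then (R f, DR_f · v) ∈ S, where DR_f denotes the Fréchet derivative of R at f; (4) compactness: the set {(R̃ f, DR̃_f · v) : (f, v) ∈ S, ‖v‖ ≤ 1} is bounded in B̃ × B̃; (5) uniform continuity: there exists C > 0 such that for every f with E_f ≠ ∅ and every n ∈ ℕ, sup{‖D(Rⁿ)_f · v‖ : v ∈ E_f, ‖v‖ ≤ 1} ≤ C, where D(Rⁿ)_f is the Fréchet derivative at f of the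 n-th iterate of R (well defined on the first projection of S by invariance); (6) pointwise decay: for every (f, v) ∈ S, ‖D(Rⁿ)_f · v‖ → 0 as n → ∞. Then there exist λ < 1 and N ∈ ℕ such that for every f with E_f ≠ ∅, sup{‖D(R^N)_f · v‖ : v ∈ E_f, ‖v‖ ≤ 1} ≤ λ. -/
/-!
Since `R̃` is complex differentiable, Cauchy estimates along complex lines show that its
derivative is locally Lipschitz, so `(f, v) ↦ D(Rⁿ)_f v` is continuous at the points of `S`.
By compactness of `i`, one step of the dynamics maps the unit vectors of the fibers into a
compact subset `T` of `S`. On `T` the functions `‖D(Rⁿ)_f v‖` are continuous, tend to `0`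
pointwise by (6), and are quasi-monotone, `‖D(R^{m+k})_f v‖ ≤ C ‖D(Rᵐ)_f v‖` by (1), (3) and
(5); as in Dini's theorem they then tend to `0` uniformly on `T`. Hence
`‖D(R^{N+1})_f v‖ = ‖D(R^N)_{Rf} (DR_f v)‖ ≤ 1/2` for `N` large.
-/

open scoped Topology

/-- The derivative of the `n`-th iterate of `R` at `f`, given by the chain rule:
`D(Rⁿ)_f = DR_{R^{n-1}f} ∘ ⋯ ∘ DR_f`, where `DR g` is the derivative of `R` at `g`. -/
noncomputable def iterDeriv {B : Type*} [NormedAddCommGroup B] [NormedSpace ℂ B]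
    (R : B → B) (DR : B → B →L[ℂ] B) : ℕ → B → (B →L[ℂ] B)
  | 0, _ => ContinuousLinearMap.id ℂ B
  | n + 1, f => (DR (R^[n] f)).comp (iterDeriv R DR n f)

open Metric Set Filter Topology

section CauchyEstimate

variable {E F : Type*} [NormedAddCommGroup E] [NormedSpace ℂ E]
  [NormedAddCommGroup F] [NormedSpace ℂ F]

theorem HasFDerivAt.norm_le_of_forall_mem_closedBall_norm_le {f : E → F} {f' : E →L[ℂ] F}
    {x : E} {ρ M : ℝ} (hf' : HasFDerivAt f f' x) (hρ : 0 < ρ)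
    (hd : DifferentiableOn ℂ f (closedBall x ρ)) (hM : ∀ y ∈ closedBall x ρ, ‖f y‖ ≤ M) :
    ‖f'‖ ≤ M / ρ := by
  have hM0 : 0 ≤ M := (norm_nonneg _).trans (hM x (mem_closedBall_self hρ.le))
  refine f'.opNorm_le_bound' (by positivity) fun u hu => ?_
  -- Cauchy's estimate for `z ↦ f (x + z • u)` on the disc of radius `ρ / ‖u‖`
  have hu0 : 0 < ‖u‖ := (norm_nonneg u).lt_of_ne' hu
  set r := ρ / ‖u‖ with hr
  have hline : MapsTo (fun z : ℂ => x + z • u) (closedBall 0 r) (closedBall x ρ) := by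
    intro z hz
    rw [mem_closedBall_zero_iff] at hz
    rw [mem_closedBall, dist_self_add_left, norm_smul]
    calc ‖z‖ * ‖u‖ ≤ r * ‖u‖ := by gcongr
      _ = ρ := div_mul_cancel₀ ρ hu
  have hg : DifferentiableOn ℂ (fun z : ℂ => f (x + z • u)) (closedBall 0 r) :=
    hd.comp (by fun_prop : Differentiable ℂ fun z : ℂ => x + z • u).differentiableOn hline
  have hderiv : HasDerivAt (fun z : ℂ => f (x + z • u)) (f' u) 0 := by
    have hlin : HasDerivAt (fun z : ℂ => x + z • u) u 0 := by
      simpa using ((hasDerivAt_id (0 : ℂ)).smul_const u).const_add x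
    exact (by simpa using hf' : HasFDerivAt f f' (x + (0 : ℂ) • u)).comp_hasDerivAt 0 hlin
  have := Complex.norm_deriv_le_of_forall_mem_sphere_norm_le (div_pos hρ hu0)
    (hg.diffContOnCl_ball subset_rfl) fun z hz => hM _ (hline (sphere_subset_closedBall hz))
  rw [hderiv.deriv] at this
  calc ‖f' u‖ ≤ M / r := this
    _ = M / ρ * ‖u‖ := by rw [hr]; field_simp

theorem lipschitzOnWith_of_forall_hasFDerivAt_of_norm_le {f : E → F} {f' : E → E →L[ℂ] F}
    {a : E} {r M : ℝ} (hr : 0 < r) (hf : ∀ x ∈ ball a r, HasFDerivAt f (f' x) x)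
    (hM : ∀ x ∈ ball a r, ‖f x‖ ≤ M) :
    LipschitzOnWith (16 * M / r ^ 2).toNNReal f' (ball a (r / 4)) := by
  have hd : ∀ {s}, s ⊆ ball a r → DifferentiableOn ℂ f s := fun hs x hx =>
    (hf x (hs hx)).differentiableAt.differentiableWithinAt
  set L := M / (r / 4) with hL
  have hbound : ∀ x ∈ ball a (r / 2), ‖f' x‖ ≤ L := fun x hx =>
    have hsub : closedBall x (r / 4) ⊆ ball a r :=
      closedBall_subset_ball' (by rw [mem_ball] at hx; linarith)
    (hf x (hsub (mem_closedBall_self (by positivity)))).norm_le_of_forall_mem_closedBall_norm_le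
      (by positivity) (hd hsub) fun y hy => hM y (hsub hy)
  have hlip : ∀ x ∈ ball a (r / 2), ∀ y ∈ ball a (r / 2), ‖f y - f x‖ ≤ L * ‖y - x‖ :=
    fun x hx y hy => (convex_ball a (r / 2)).norm_image_sub_le_of_norm_hasFDerivWithin_le
      (fun z hz => (hf z (ball_subset_ball (by linarith) hz)).hasFDerivWithinAt) hbound hx hy
  refine LipschitzOnWith.of_dist_le' fun x hx y hy => ?_
  rw [dist_eq_norm, dist_eq_norm, norm_sub_rev x y]
  -- `f' x - f' y` is the derivative at `x` of `w ↦ f w - f (w + (y - x))`, which `hlip` bounds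
  set g : E → F := fun w => f w - f (w + (y - x))
  have hshift : ∀ w ∈ closedBall x (r / 4),
      w ∈ ball a (r / 2) ∧ w + (y - x) ∈ ball a (r / 2) := by
    intro w hw
    rw [mem_ball] at hx hy ⊢
    rw [mem_closedBall] at hw
    refine ⟨by linarith [dist_triangle w x a], ?_⟩
    calc dist (w + (y - x)) a = ‖(w - x) + (y - a)‖ := by rw [dist_eq_norm]; abel_nf
      _ ≤ dist w x + dist y a := by rw [dist_eq_norm, dist_eq_norm]; exact norm_add_le _ _
      _ < r / 2 := by linarith
  have hg : ∀ w ∈ closedBall x (r / 4), HasFDerivAt g (f' w - f' (w + (y - x))) w := by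
    intro w hw
    have h := hshift w hw
    exact (hf w (ball_subset_ball (by linarith) h.1)).sub <|
      (hf _ (ball_subset_ball (by linarith) h.2)).comp w ((hasFDerivAt_id w).add_const (y - x))
  have := (hg x (mem_closedBall_self (by positivity))).norm_le_of_forall_mem_closedBall_norm_le
    (by positivity) (fun w hw => (hg w hw).differentiableAt.differentiableWithinAt)
    (M := L * ‖y - x‖) fun w hw => by
      have h := hshift w hw
      simpa [g, norm_sub_rev] using hlip _ h.1 _ h.2
  rw [add_sub_cancel] at this
  calc ‖f' x - f' y‖ ≤ L * ‖y - x‖ / (r / 4) := this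
    _ = 16 * M / r ^ 2 * ‖y - x‖ := by rw [hL]; field_simp; ring
    _ ≤ _ := by gcongr

theorem continuousOn_derivative_of_forall_hasFDerivAt {V : Set E} (hV : IsOpen V) {f : E → F}
    {f' : E → E →L[ℂ] F} (hf : ∀ x ∈ V, HasFDerivAt f (f' x) x) : ContinuousOn f' V := by
  intro a ha
  obtain ⟨r, hr, hball⟩ : ∃ r > 0, ball a r ⊆ V ∩ {x | ‖f x‖ < ‖f a‖ + 1} :=
    Metric.mem_nhds_iff.mp <| inter_mem (hV.mem_nhds ha)
      ((hf a ha).continuousAt.norm.eventually_lt_const (lt_add_one _))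
  have hlip := lipschitzOnWith_of_forall_hasFDerivAt_of_norm_le hr
    (fun x hx => hf x (hball hx).1) fun x hx => (hball hx).2.le
  exact (hlip.continuousOn.continuousAt (ball_mem_nhds a (by positivity))).continuousWithinAt

end CauchyEstimate

theorem eventually_forall_lt_of_tendsto_zero_of_quasiMonotone {X : Type*} [TopologicalSpace X]
    {K : Set X} (hK : IsCompact K) {φ : ℕ → X → ℝ} {C : ℝ} (hC : 0 ≤ C)
    (hcont : ∀ n, ∀ x ∈ K, ContinuousWithinAt (φ n) K x)
    (hquasi : ∀ x ∈ K, ∀ m k, φ (m + k) x ≤ C * φ m x)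
    (hlim : ∀ x ∈ K, Tendsto (φ · x) atTop (𝓝 0)) {ε : ℝ} (hε : 0 < ε) :
    ∀ᶠ n in atTop, ∀ x ∈ K, φ n x < ε := by
  set δ := ε / (C + 1)
  have hδ : 0 < δ := by positivity
  refine hK.induction_on (p := fun s => ∀ᶠ n in atTop, ∀ x ∈ s, φ n x < ε) (by simp)
    (fun s t hst ht => ht.mono fun n hn x hx => hn x (hst hx))
    (fun s t hs ht => (hs.and ht).mono fun n hn x hx => hx.elim (hn.1 x) (hn.2 x)) ?_
  intro x hx
  obtain ⟨m, hm⟩ := ((hlim x hx).eventually_lt_const hδ).exists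
  refine ⟨{y ∈ K | φ m y < δ}, inter_mem self_mem_nhdsWithin
    ((hcont m x hx).eventually_lt_const hm), eventually_atTop.mpr ⟨m, fun n hn y hy => ?_⟩⟩
  obtain ⟨k, rfl⟩ := Nat.exists_eq_add_of_le hn
  calc φ (m + k) y ≤ C * φ m y := hquasi y hy.1 m k
    _ ≤ C * δ := by gcongr; exact hy.2.le
    _ < ε := by rw [mul_div_assoc', div_lt_iff₀ (by positivity)]; linarith

theorem norm_apply_le_mul_norm_of_smul_mem {E F : Type*} [NormedAddCommGroup E] [NormedSpace ℂ E]
    [NormedAddCommGroup F] [NormedSpace ℂ F] {s : Set E} (hs : ∀ (c : ℂ) v, v ∈ s → c • v ∈ s)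
    (T : E →L[ℂ] F) {C : ℝ} (hT : ∀ v ∈ s, ‖v‖ ≤ 1 → ‖T v‖ ≤ C) {v : E} (hv : v ∈ s) :
    ‖T v‖ ≤ C * ‖v‖ := by
  rcases eq_or_ne v 0 with rfl | hv0
  · simp
  have hpos : 0 < ‖v‖ := norm_pos_iff.mpr hv0
  have h := hT _ (hs ((‖v‖⁻¹ : ℝ) : ℂ) v hv) (by simp [norm_smul, inv_mul_cancel₀ hpos.ne'])
  rw [map_smul, norm_smul, Complex.norm_real, Real.norm_of_nonneg (by positivity),
    inv_mul_le_iff₀ hpos] at h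
  linarith

namespace iterDeriv

variable {B : Type*} [NormedAddCommGroup B] [NormedSpace ℂ B] {R : B → B} {DR : B → B →L[ℂ] B}

theorem add_apply (m n : ℕ) (f v : B) :
    iterDeriv R DR (m + n) f v = iterDeriv R DR n (R^[m] f) (iterDeriv R DR m f v) := by
  induction n with
  | zero => rfl
  | succ n ih =>
    change DR (R^[m + n] f) (iterDeriv R DR (m + n) f v)
      = DR (R^[n] (R^[m] f)) (iterDeriv R DR n (R^[m] f) (iterDeriv R DR m f v))
    rw [ih, Nat.add_comm, Function.iterate_add_apply]

theorem succ_apply' (n : ℕ) (f v : B) :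
    iterDeriv R DR (n + 1) f v = iterDeriv R DR n (R f) (DR f v) := by
  rw [Nat.add_comm, add_apply]
  rfl

theorem iterate_mem {S : Set (B × B)} (hS : ∀ f v, (f, v) ∈ S → (R f, DR f v) ∈ S)
    (n : ℕ) {f v : B} (h : (f, v) ∈ S) : (R^[n] f, iterDeriv R DR n f v) ∈ S := by
  induction n with
  | zero => exact h
  | succ n ih =>
    rw [Function.iterate_succ_apply']
    exact hS _ _ ih

theorem continuousAt_apply {p : B × B} (hR : ∀ j, ContinuousAt R (R^[j] p.1))
    (hDR : ∀ j, ContinuousAt DR (R^[j] p.1)) (n : ℕ) :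
    ContinuousAt (fun q : B × B => iterDeriv R DR n q.1 q.2) p := by
  have hiter : ∀ n, ContinuousAt R^[n] p.1 := by
    intro n
    induction n with
    | zero => exact continuousAt_id
    | succ n ih =>
      rw [Function.iterate_succ']
      exact (hR n).comp ih
  have hderiv : ContinuousAt (iterDeriv R DR n) p.1 := by
    induction n with
    | zero => exact continuousAt_const
    | succ n ih => exact ((hDR n).comp (hiter n)).clm_comp ih
  exact (hderiv.comp continuousAt_fst).clm_apply continuousAt_snd

end iterDeriv

theorem IsCompactOperator.exists_isCompact_mapsTo_prodMap {𝕜 E F : Type*}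
    [NontriviallyNormedField 𝕜] [NormedAddCommGroup E] [NormedSpace 𝕜 E]
    [NormedAddCommGroup F] [NormedSpace 𝕜 F] {i : E →L[𝕜] F} (hi : IsCompactOperator i)
    {s : Set (E × E)} (hs : Bornology.IsBounded s) :
    ∃ K : Set (F × F), IsCompact K ∧ MapsTo (Prod.map i i) s K := by
  obtain ⟨K₁, hK₁, h₁⟩ := hi.image_subset_compact_of_bounded hs.image_fst
  obtain ⟨K₂, hK₂, h₂⟩ := hi.image_subset_compact_of_bounded hs.image_snd
  exact ⟨K₁ ×ˢ K₂, hK₁.prod hK₂, fun p hp => ⟨h₁ (mem_image_of_mem _ (mem_image_of_mem _ hp)),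
    h₂ (mem_image_of_mem _ (mem_image_of_mem _ hp))⟩⟩

theorem stmt0_general
    {B Bt : Type*}
    [NormedAddCommGroup B] [NormedSpace ℂ B]
    [NormedAddCommGroup Bt] [NormedSpace ℂ Bt]
    -- `i : B̃ → B` is a compact continuous linear map
    (i : Bt →L[ℂ] B) (hi : IsCompactOperator i)
    -- `V ⊆ B` is open and `R̃ : V → B̃` is Fréchet differentiable, with derivative `DRt f` at `f`
    (V : Set B) (hV : IsOpen V)
    (Rt : B → Bt) (DRt : B → B →L[ℂ] Bt)
    (hdiff : ∀ f ∈ V, HasFDerivAt Rt (DRt f) f)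
    -- `R := i ∘ R̃`, with derivative `DR f = i ∘ DRt f` at `f`
    (R : B → B) (hR : ∀ f, R f = i (Rt f))
    (DR : B → B →L[ℂ] B) (hDR : ∀ f, DR f = i.comp (DRt f))
    -- `S ⊆ B × B`, with first projection contained in `V`
    (S : Set (B × B)) (hSV : ∀ p ∈ S, p.1 ∈ V)
    -- (1) vector bundle structure
    (h1 : ∀ f v₁ v₂, (f, v₁) ∈ S → (f, v₂) ∈ S → ∀ α : ℂ, (f, α • v₁ + v₂) ∈ S)
    -- (2) semicontinuity: `S` is closed
    (h2 : IsClosed S)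
    -- (3) invariance
    (h3 : ∀ f v, (f, v) ∈ S → (R f, DR f v) ∈ S)
    -- (4) compactness
    (h4 : Bornology.IsBounded
      {p : Bt × Bt | ∃ f v, (f, v) ∈ S ∧ ‖v‖ ≤ 1 ∧ p = (Rt f, DRt f v)})
    -- (5) uniform continuity
    (h5 : ∃ C > (0 : ℝ), ∀ f : B, (∃ v, (f, v) ∈ S) → ∀ n : ℕ, ∀ v : B,
      (f, v) ∈ S → ‖v‖ ≤ 1 → ‖iterDeriv R DR n f v‖ ≤ C)
    -- (6) pointwise decay
    (h6 : ∀ f v, (f, v) ∈ S →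
      Filter.Tendsto (fun n : ℕ => ‖iterDeriv R DR n f v‖) Filter.atTop (𝓝 0)) :
    -- conclusion: uniform contraction of some iterate on the fibers of `S`
    ∃ (lam : ℝ) (N : ℕ), lam < 1 ∧ ∀ f : B, (∃ v, (f, v) ∈ S) → ∀ v : B,
      (f, v) ∈ S → ‖v‖ ≤ 1 → ‖iterDeriv R DR N f v‖ ≤ lam := by
  obtain ⟨C, hC0, hC⟩ := h5
  have hsmul : ∀ f (c : ℂ) v, (f, v) ∈ S → (f, c • v) ∈ S := fun f c v h => by
    have h0 : (f, (0 : B)) ∈ S := by simpa using h1 f v v h h (-1)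
    simpa using h1 f v 0 h h0 c
  have hcontR : ∀ f ∈ V, ContinuousAt R f := fun f hf => by
    rw [show R = fun f => i (Rt f) from funext hR]
    exact i.continuous.continuousAt.comp (hdiff f hf).continuousAt
  have hcontDR : ∀ f ∈ V, ContinuousAt DR f := fun f hf => by
    rw [show DR = fun f => i.comp (DRt f) from funext hDR]
    exact continuousAt_const.clm_comp
      ((continuousOn_derivative_of_forall_hasFDerivAt hV hdiff).continuousAt (hV.mem_nhds hf))
  obtain ⟨K, hK, hRK⟩ := hi.exists_isCompact_mapsTo_prodMap h4
  set T := S ∩ K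
  have hRT : ∀ f v, (f, v) ∈ S → ‖v‖ ≤ 1 → (R f, DR f v) ∈ T := fun f v hfv hv =>
    ⟨h3 f v hfv, by simpa [hR, hDR] using hRK ⟨f, v, hfv, hv, rfl⟩⟩
  have hcont : ∀ n, ∀ p ∈ T,
      ContinuousWithinAt (fun q : B × B => ‖iterDeriv R DR n q.1 q.2‖) T p := fun n p hp =>
    have horbit j : R^[j] p.1 ∈ V := hSV _ (iterDeriv.iterate_mem h3 j hp.1)
    (iterDeriv.continuousAt_apply (fun j => hcontR _ (horbit j))
      (fun j => hcontDR _ (horbit j)) n).norm.continuousWithinAt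
  have hquasi : ∀ p ∈ T, ∀ m k,
      ‖iterDeriv R DR (m + k) p.1 p.2‖ ≤ C * ‖iterDeriv R DR m p.1 p.2‖ := fun p hp m k => by
    have hm := iterDeriv.iterate_mem h3 m hp.1
    rw [iterDeriv.add_apply]
    exact norm_apply_le_mul_norm_of_smul_mem (hsmul _) _ (hC _ ⟨_, hm⟩ k) hm
  obtain ⟨N, hN⟩ := (eventually_forall_lt_of_tendsto_zero_of_quasiMonotone (hK.inter_left h2)
    hC0.le hcont hquasi (fun p hp => h6 p.1 p.2 hp.1) one_half_pos).exists
  refine ⟨1 / 2, N + 1, by norm_num, fun f _ v hfv hv => ?_⟩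
  rw [iterDeriv.succ_apply']
  exact (hN _ (hRT f v hfv hv)).le

theorem stmt0
    {B Bt : Type*}
    [NormedAddCommGroup B] [NormedSpace ℂ B] [CompleteSpace B]
    [NormedAddCommGroup Bt] [NormedSpace ℂ Bt] [CompleteSpace Bt]
    -- `i : B̃ → B` is a compact continuous linear map
    (i : Bt →L[ℂ] B) (hi : IsCompactOperator i)
    -- `V ⊆ B` is open and `R̃ : V → B̃` is Fréchet differentiable, with derivative `DRt f` at `f`
    (V : Set B) (hV : IsOpen V)
    (Rt : B → Bt) (DRt : B → B →L[ℂ] Bt)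
    (hdiff : ∀ f ∈ V, HasFDerivAt Rt (DRt f) f)
    -- `R := i ∘ R̃`, with derivative `DR f = i ∘ DRt f` at `f`
    (R : B → B) (hR : ∀ f, R f = i (Rt f))
    (DR : B → B →L[ℂ] B) (hDR : ∀ f, DR f = i.comp (DRt f))
    -- `S ⊆ B × B`, with first projection contained in `V`
    (S : Set (B × B)) (hSV : ∀ p ∈ S, p.1 ∈ V)
    -- (1) vector bundle structure
    (h1 : ∀ f v₁ v₂, (f, v₁) ∈ S → (f, v₂) ∈ S → ∀ α : ℂ, (f, α • v₁ + v₂) ∈ S)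
    -- (2) semicontinuity: `S` is closed
    (h2 : IsClosed S)
    -- (3) invariance
    (h3 : ∀ f v, (f, v) ∈ S → (R f, DR f v) ∈ S)
    -- (4) compactness
    (h4 : Bornology.IsBounded
      {p : Bt × Bt | ∃ f v, (f, v) ∈ S ∧ ‖v‖ ≤ 1 ∧ p = (Rt f, DRt f v)})
    -- (5) uniform continuity
    (h5 : ∃ C > (0 : ℝ), ∀ f : B, (∃ v, (f, v) ∈ S) → ∀ n : ℕ, ∀ v : B,
      (f, v) ∈ S → ‖v‖ ≤ 1 → ‖iterDeriv R DR n f v‖ ≤ C)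
    -- (6) pointwise decay
    (h6 : ∀ f v, (f, v) ∈ S →
      Filter.Tendsto (fun n : ℕ => ‖iterDeriv R DR n f v‖) Filter.atTop (𝓝 0)) :
    -- conclusion: uniform contraction of some iterate on the fibers of `S`
    ∃ (lam : ℝ) (N : ℕ), lam < 1 ∧ ∀ f : B, (∃ v, (f, v) ∈ S) → ∀ v : B,
      (f, v) ∈ S → ‖v‖ ≤ 1 → ‖iterDeriv R DR N f v‖ ≤ lam :=
  stmt0_general i hi V hV Rt DRt hdiff R hR DR hDR S hSV h1 h2 h3 h4 h5 h6
end

section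
/- Let B be a complex Banach space and let T : B → B be a compact continuous linear operator such that Tⁿ v → 0 as n → ∞ for every v ∈ B. Then the spectral radius of T is strictly smaller than one. -/
/-!
By Banach–Steinhaus the powers `Tⁿ` are uniformly bounded, hence equicontinuous, so their pointwise
convergence to `0` is uniform on compact sets. Compactness of `T` puts the image `T(B₁)` of the
unit ball in a compact set, whence `‖Tⁿ⁺¹‖ = sup_{y ∈ T(B₁)} ‖Tⁿ y‖ → 0`. Once some power has
norm `< 1`, the easy half `ρ(T)ⁿ ≤ ‖Tⁿ‖` of Gelfand's formula gives `ρ(T) < 1`.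
-/

open scoped Topology NNReal ENNReal
open Filter

theorem EquicontinuousOn.tendstoUniformlyOn_of_tendsto {ι X α : Type*} [TopologicalSpace X]
    [UniformSpace α] {F : ι → X → α} {f : X → α} {K : Set X} {l : Filter ι}
    (hK : IsCompact K) (hF : EquicontinuousOn F K)
    (h : ∀ x ∈ K, Tendsto (fun i ↦ F i x) l (𝓝 (f x))) : TendstoUniformlyOn F f l K := by
  have hunif := (EquicontinuousOn.tendsto_uniformOnFun_iff_pi' (𝔖 := {K})
    (by simpa using hK) (by simpa using hF) l f).mpr <| by
      simpa [tendsto_pi_nhds] using fun x hx ↦ h x hx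
  exact UniformOnFun.tendsto_iff_tendstoUniformlyOn.mp hunif K rfl

section StrongConvergence

variable {𝕜 E F : Type*} [NontriviallyNormedField 𝕜] [NormedAddCommGroup E] [NormedSpace 𝕜 E]
  [CompleteSpace E] [NormedAddCommGroup F] [NormedSpace 𝕜 F] {S : ℕ → E →L[𝕜] F} {g : E → F}

theorem ContinuousLinearMap.equicontinuous_of_tendsto_apply
    (hS : ∀ x, Tendsto (fun n ↦ S n x) atTop (𝓝 (g x))) : Equicontinuous ((⇑) ∘ S) := by
  refine ((NormedSpace.equicontinuous_TFAE S).out 1 5).mpr (banach_steinhaus fun x ↦ ?_)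
  obtain ⟨C, hC⟩ := (hS x).norm.bddAbove_range
  exact ⟨C, fun n ↦ hC ⟨n, rfl⟩⟩

theorem ContinuousLinearMap.tendstoUniformlyOn_of_tendsto_apply {K : Set E} (hK : IsCompact K)
    (hS : ∀ x, Tendsto (fun n ↦ S n x) atTop (𝓝 (g x))) :
    TendstoUniformlyOn (fun n ↦ ⇑(S n)) g atTop K :=
  (equicontinuous_of_tendsto_apply hS).equicontinuousOn K |>.tendstoUniformlyOn_of_tendsto hK
    fun x _ ↦ hS x

end StrongConvergence

theorem IsCompactOperator.tendsto_norm_comp_of_tendsto_apply {𝕜 E F G : Type*} [RCLike 𝕜]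
    [NormedAddCommGroup E] [NormedSpace 𝕜 E] [CompleteSpace E] [NormedAddCommGroup F]
    [NormedSpace 𝕜 F] [NormedAddCommGroup G] [NormedSpace 𝕜 G] {T : G →L[𝕜] E}
    (hT : IsCompactOperator T) {S : ℕ → E →L[𝕜] F}
    (hS : ∀ x, Tendsto (fun n ↦ S n x) atTop (𝓝 0)) :
    Tendsto (fun n ↦ ‖(S n).comp T‖) atTop (𝓝 0) := by
  obtain ⟨K, hK, hTK⟩ := hT.image_closedBall_subset_compact 1
  have hunif := ContinuousLinearMap.tendstoUniformlyOn_of_tendsto_apply (g := 0) hK hS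
  rw [Metric.tendsto_nhds]
  intro ε hε
  filter_upwards [Metric.tendstoUniformlyOn_iff.mp hunif (ε / 2) (half_pos hε)] with n hn
  have hnorm : ‖(S n).comp T‖ ≤ ε / 2 := by
    refine ContinuousLinearMap.opNorm_le_of_unit_norm (half_pos hε).le fun x hx ↦ ?_
    have hTx : T x ∈ K := hTK ⟨x, by simp [hx], rfl⟩
    simpa using (hn (T x) hTx).le
  rw [dist_zero_right, norm_norm]
  linarith

theorem spectrum.spectralRadius_lt_one_of_tendsto_norm_pow {𝕜 A : Type*} [NormedField 𝕜]
    [NormedRing A] [NormedAlgebra 𝕜 A] [CompleteSpace A] {a : A}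
    (h : Tendsto (fun n ↦ ‖a ^ n‖) atTop (𝓝 0)) : spectralRadius 𝕜 a < 1 := by
  have hsmall : Tendsto (fun n ↦ ‖a ^ (n + 1)‖ * ‖(1 : A)‖) atTop (𝓝 0) := by
    simpa using ((tendsto_add_atTop_iff_nat 1).mpr h).mul_const ‖(1 : A)‖
  obtain ⟨n, hn⟩ := (hsmall.eventually (gt_mem_nhds one_pos)).exists
  calc spectralRadius 𝕜 a
      ≤ (‖a ^ (n + 1)‖₊ : ℝ≥0∞) ^ (1 / (n + 1) : ℝ) * (‖(1 : A)‖₊ : ℝ≥0∞) ^ (1 / (n + 1) : ℝ) :=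
        spectralRadius_le_pow_nnnorm_pow_one_div 𝕜 a n
    _ = ((‖a ^ (n + 1)‖₊ * ‖(1 : A)‖₊ : ℝ≥0) : ℝ≥0∞) ^ (1 / (n + 1) : ℝ) := by
        rw [ENNReal.coe_mul, ENNReal.mul_rpow_of_nonneg _ _ (by positivity)]
    _ < 1 := ENNReal.rpow_lt_one (by exact_mod_cast hn) (by positivity)

theorem stmt1 {B : Type*} [NormedAddCommGroup B] [NormedSpace ℂ B] [CompleteSpace B]
    (T : B →L[ℂ] B) (hT : IsCompactOperator T)
    (h : ∀ v : B, Filter.Tendsto (fun n : ℕ => (T ^ n) v) Filter.atTop (𝓝 0)) :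
    spectralRadius ℂ T < 1 := by
  have hpow : Tendsto (fun n ↦ ‖T ^ (n + 1)‖) atTop (𝓝 0) := by
    simpa only [pow_succ, ContinuousLinearMap.mul_def] using
      hT.tendsto_norm_comp_of_tendsto_apply h
  exact spectrum.spectralRadius_lt_one_of_tendsto_norm_pow ((tendsto_add_atTop_iff_nat 1).mp hpow)
end

section
/- Let B be a complex Banach space, V ⊆ B an open set, R : V → B a Fréchet differentiable map, and f* ∈ V a fixed point of R (R f* = f*). Let S ⊆ B × B have first projection contained in V and be invariant, i.e. if (f, v) ∈ S then (R f, DR_f · v) ∈ S. Assume there exist N ∈ ℕ, λ < 1 and C > 0 such that for every (f, v) ∈ S one has ‖D(R^N)_f · v‖ ≤ λ ‖v‖, and ‖D(Rᵏ)_f · v‖ ≤ C ‖v‖ for all k ∈ ℕ. Let γ : [0,1] → V be a continuously differentiable path with γ(1) = f* and (γ(t), γ'(t)) ∈ S for every t ∈ [0,1]. Then there exists a constant C' > 0 (depending only on C, λ, N and sup_t ‖γ'(t)‖) such that ‖Rⁿ(γ(0)) − f*‖ ≤ C' λ^{⌊n/N⌋} for every n ∈ ℕ. -/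
/-!
Every tangent vector `(γ t, γ' t)` lies in the invariant set `S`, so along the orbit the derivatives
of the iterates contract: writing `n = N q + r`, the first `N q` steps shrink the vector by `λ ^ q`
and the remaining `r` steps enlarge it by at most `C`. Hence the curve `t ↦ Rⁿ (γ t)` has speed at
most `C λ ^ ⌊n / N⌋ sup ‖γ'‖`, and since it ends at the fixed point `f*`, the mean value inequality
bounds `‖Rⁿ (γ 0) - f*‖` by the same quantity.
-/

open scoped Topology

section IterDeriv

variable {B : Type*} [NormedAddCommGroup B] [NormedSpace ℂ B] (R : B → B) (DR : B → B →L[ℂ] B)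

lemma iterDeriv_add (m n : ℕ) (f : B) :
    iterDeriv R DR (m + n) f = (iterDeriv R DR m (R^[n] f)).comp (iterDeriv R DR n f) := by
  induction m with
  | zero => rw [Nat.zero_add]; rfl
  | succ m ih =>
    rw [Nat.add_right_comm]
    simp only [iterDeriv, ih, Function.iterate_add_apply, ContinuousLinearMap.comp_assoc]

lemma hasFDerivAt_iterate_of_forall_lt {n : ℕ} {f : B}
    (hR : ∀ k < n, HasFDerivAt R (DR (R^[k] f)) (R^[k] f)) :
    HasFDerivAt R^[n] (iterDeriv R DR n f) f := by
  induction n with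
  | zero => exact hasFDerivAt_id f
  | succ n ih =>
    rw [Function.iterate_succ']
    exact (hR n n.lt_succ_self).comp f (ih fun k hk => hR k (hk.trans n.lt_succ_self))

variable {R DR} {S : Set (B × B)} (hinv : ∀ f v, (f, v) ∈ S → (R f, DR f v) ∈ S)
include hinv

lemma iterate_iterDeriv_mem_of_invariant {f v : B} (h : (f, v) ∈ S) (n : ℕ) :
    (R^[n] f, iterDeriv R DR n f v) ∈ S := by
  induction n with
  | zero => exact h
  | succ n ih =>
    rw [Function.iterate_succ_apply']
    exact hinv _ _ ih

lemma norm_iterDeriv_mul_le_pow {N : ℕ} {lam : ℝ} (hlam0 : 0 ≤ lam)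
    (hcontr : ∀ f v, (f, v) ∈ S → ‖iterDeriv R DR N f v‖ ≤ lam * ‖v‖)
    {f v : B} (h : (f, v) ∈ S) (q : ℕ) :
    ‖iterDeriv R DR (N * q) f v‖ ≤ lam ^ q * ‖v‖ := by
  induction q with
  | zero => simp [iterDeriv]
  | succ q ih =>
    rw [Nat.mul_succ, Nat.add_comm, iterDeriv_add]
    calc ‖iterDeriv R DR N (R^[N * q] f) (iterDeriv R DR (N * q) f v)‖
        ≤ lam * ‖iterDeriv R DR (N * q) f v‖ :=
          hcontr _ _ (iterate_iterDeriv_mem_of_invariant hinv h _)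
      _ ≤ lam * (lam ^ q * ‖v‖) := by gcongr
      _ = lam ^ (q + 1) * ‖v‖ := by ring

lemma norm_iterDeriv_le_pow_div {N : ℕ} {lam C : ℝ} (hlam0 : 0 ≤ lam) (hC : 0 ≤ C)
    (hcontr : ∀ f v, (f, v) ∈ S → ‖iterDeriv R DR N f v‖ ≤ lam * ‖v‖)
    (hunif : ∀ f v, (f, v) ∈ S → ∀ k : ℕ, ‖iterDeriv R DR k f v‖ ≤ C * ‖v‖)
    {f v : B} (h : (f, v) ∈ S) (n : ℕ) :
    ‖iterDeriv R DR n f v‖ ≤ C * lam ^ (n / N) * ‖v‖ := by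
  rw [← Nat.mod_add_div n N, iterDeriv_add, Nat.mod_add_div]
  calc ‖iterDeriv R DR (n % N) (R^[N * (n / N)] f) (iterDeriv R DR (N * (n / N)) f v)‖
      ≤ C * ‖iterDeriv R DR (N * (n / N)) f v‖ :=
        hunif _ _ (iterate_iterDeriv_mem_of_invariant hinv h _) _
    _ ≤ C * (lam ^ (n / N) * ‖v‖) := by
        gcongr
        exact norm_iterDeriv_mul_le_pow hinv hlam0 hcontr h _
    _ = C * lam ^ (n / N) * ‖v‖ := by ring

lemma norm_iterate_sub_le_of_path {V : Set B} (hdiff : ∀ f ∈ V, HasFDerivAt R (DR f) f)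
    (hSV : ∀ p ∈ S, p.1 ∈ V) {γ γ' : ℝ → B}
    (hγ : ∀ t ∈ Set.Icc (0 : ℝ) 1, HasDerivAt γ (γ' t) t)
    (hγS : ∀ t ∈ Set.Icc (0 : ℝ) 1, (γ t, γ' t) ∈ S) (n : ℕ) {K : ℝ}
    (hK : ∀ t ∈ Set.Icc (0 : ℝ) 1, ‖iterDeriv R DR n (γ t) (γ' t)‖ ≤ K) :
    ‖R^[n] (γ 1) - R^[n] (γ 0)‖ ≤ K := by
  have hderiv : ∀ t ∈ Set.Icc (0 : ℝ) 1,
      HasDerivWithinAt (fun t => R^[n] (γ t)) (iterDeriv R DR n (γ t) (γ' t))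
        (Set.Icc 0 1) t := by
    intro t ht
    have hR : HasFDerivAt R^[n] (iterDeriv R DR n (γ t)) (γ t) :=
      hasFDerivAt_iterate_of_forall_lt R DR fun k _ =>
        hdiff _ (hSV _ (iterate_iterDeriv_mem_of_invariant hinv (hγS t ht) k))
    exact ((hR.restrictScalars ℝ).comp_hasDerivAt t (hγ t ht)).hasDerivWithinAt
  simpa using norm_image_sub_le_of_norm_deriv_le_segment' hderiv
    (fun t ht => hK t (Set.Ico_subset_Icc_self ht)) 1 (Set.right_mem_Icc.2 zero_le_one)

end IterDeriv

theorem stmt5_general {B : Type*} [NormedAddCommGroup B] [NormedSpace ℂ B]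
    -- `V ⊆ B` open, `R : V → B` Fréchet differentiable with derivative `DR f` at `f`
    (V : Set B)
    (R : B → B) (DR : B → B →L[ℂ] B)
    (hdiff : ∀ f ∈ V, HasFDerivAt R (DR f) f)
    -- `f*` is a fixed point of `R` in `V`
    (fstar : B) (hfix : R fstar = fstar)
    -- `S ⊆ B × B` has first projection contained in `V` and is invariant
    (S : Set (B × B)) (hSV : ∀ p ∈ S, p.1 ∈ V)
    (hinv : ∀ f v, (f, v) ∈ S → (R f, DR f v) ∈ S)
    -- contraction constants
    (N : ℕ) (lam : ℝ) (hlam0 : 0 ≤ lam) (C : ℝ) (hC : 0 < C)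
    (hcontr : ∀ f v, (f, v) ∈ S → ‖iterDeriv R DR N f v‖ ≤ lam * ‖v‖)
    (hunif : ∀ f v, (f, v) ∈ S → ∀ k : ℕ, ‖iterDeriv R DR k f v‖ ≤ C * ‖v‖)
    -- `γ : [0,1] → V` is a C¹ path ending at `f*` whose tangent vectors lie in `S`
    (γ γ' : ℝ → B)
    (hγ : ∀ t ∈ Set.Icc (0 : ℝ) 1, HasDerivAt γ (γ' t) t)
    (hγ'cont : ContinuousOn γ' (Set.Icc (0 : ℝ) 1))
    (hγ1 : γ 1 = fstar)
    (hγS : ∀ t ∈ Set.Icc (0 : ℝ) 1, (γ t, γ' t) ∈ S) :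
    ∃ C' > (0 : ℝ), ∀ n : ℕ, ‖R^[n] (γ 0) - fstar‖ ≤ C' * lam ^ (n / N) := by
  obtain ⟨M, hM⟩ := isCompact_Icc.exists_bound_of_continuousOn hγ'cont
  have hM0 : 0 ≤ M := (norm_nonneg _).trans (hM 0 (Set.left_mem_Icc.2 zero_le_one))
  refine ⟨C * (M + 1), by positivity, fun n => ?_⟩
  calc ‖R^[n] (γ 0) - fstar‖ = ‖R^[n] (γ 1) - R^[n] (γ 0)‖ := by
        rw [hγ1, Function.iterate_fixed hfix, norm_sub_rev]
    _ ≤ C * lam ^ (n / N) * M := by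
        refine norm_iterate_sub_le_of_path hinv hdiff hSV hγ hγS n fun t ht => ?_
        calc ‖iterDeriv R DR n (γ t) (γ' t)‖ ≤ C * lam ^ (n / N) * ‖γ' t‖ :=
              norm_iterDeriv_le_pow_div hinv hlam0 hC.le hcontr hunif (hγS t ht) n
          _ ≤ C * lam ^ (n / N) * M := by gcongr; exact hM t ht
    _ ≤ C * (M + 1) * lam ^ (n / N) := by
        rw [mul_right_comm]
        gcongr
        linarith

theorem stmt5 {B : Type*} [NormedAddCommGroup B] [NormedSpace ℂ B] [CompleteSpace B]
    -- `V ⊆ B` open, `R : V → B` Fréchet differentiable with derivative `DR f` at `f`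
    (V : Set B) (hV : IsOpen V)
    (R : B → B) (DR : B → B →L[ℂ] B)
    (hdiff : ∀ f ∈ V, HasFDerivAt R (DR f) f)
    -- `f*` is a fixed point of `R` in `V`
    (fstar : B) (hfstarV : fstar ∈ V) (hfix : R fstar = fstar)
    -- `S ⊆ B × B` has first projection contained in `V` and is invariant
    (S : Set (B × B)) (hSV : ∀ p ∈ S, p.1 ∈ V)
    (hinv : ∀ f v, (f, v) ∈ S → (R f, DR f v) ∈ S)
    -- contraction constants
    (N : ℕ) (lam : ℝ) (hlam0 : 0 ≤ lam) (hlam1 : lam < 1) (C : ℝ) (hC : 0 < C)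
    (hcontr : ∀ f v, (f, v) ∈ S → ‖iterDeriv R DR N f v‖ ≤ lam * ‖v‖)
    (hunif : ∀ f v, (f, v) ∈ S → ∀ k : ℕ, ‖iterDeriv R DR k f v‖ ≤ C * ‖v‖)
    -- `γ : [0,1] → V` is a C¹ path ending at `f*` whose tangent vectors lie in `S`
    (γ γ' : ℝ → B)
    (hγ : ∀ t ∈ Set.Icc (0 : ℝ) 1, HasDerivAt γ (γ' t) t)
    (hγ'cont : ContinuousOn γ' (Set.Icc (0 : ℝ) 1))
    (hγ1 : γ 1 = fstar)
    (hγS : ∀ t ∈ Set.Icc (0 : ℝ) 1, (γ t, γ' t) ∈ S) :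
    ∃ C' > (0 : ℝ), ∀ n : ℕ, ‖R^[n] (γ 0) - fstar‖ ≤ C' * lam ^ (n / N) :=
  stmt5_general V R DR hdiff fstar hfix S hSV hinv N lam hlam0 C hC hcontr hunif γ γ' hγ hγ'cont hγ1
    hγS
end
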